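/- Let ℓ be an odd prime and H = ℤ_ℓ ⋊ ℤ_ℓ^× (with ℤ_ℓ^× acting on ℤ_ℓ by multiplication). Assume an element (a, u) ∈ H acts on ℤ/ℓⁿℤ by x ↦ a + ux (mod ℓⁿ). The proportion (Haar measure) of elements of H that fix some point of ℤ/ℓⁿℤ for every n, equivalently the density ∫_{ℤ_ℓ^×} ℓ^{-v_ℓ(u-1)} dμ(u), equals (ℓ² - ℓ - 1)/(ℓ² - 1). -/

import Mathlib

/-!
The kernels `Uₙ` of the reductions `ℤ_ℓˣ → (ℤ/ℓⁿ)ˣ` have index `φ(ℓⁿ)`, hence Haar measure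
`1/φ(ℓⁿ)`, and `‖u - 1‖ = ℓ⁻ⁿ` exactly on `Uₙ \ Uₙ₊₁`. So the integral is
`∑ₙ ℓ⁻ⁿ (1/φ(ℓⁿ) - 1/φ(ℓⁿ⁺¹)) = (ℓ - 2)/(ℓ - 1) + ∑_{n ≥ 1} ℓ⁻²ⁿ = (ℓ² - ℓ - 1)/(ℓ² - 1)`.
-/

open MeasureTheory

theorem integral_eq_tsum_of_eqOn {X ι E : Type*} [MeasurableSpace X] [Countable ι]
    [NormedAddCommGroup E] [NormedSpace ℝ E] [CompleteSpace E] {μ : Measure X} {f : X → E}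
    (hf : Integrable f μ) {s : ι → Set X} (hs : ∀ i, MeasurableSet (s i))
    (hdisj : Pairwise (Function.onFun Disjoint s)) {c : ι → E}
    (hc : ∀ i, Set.EqOn f (fun _ => c i) (s i)) (hzero : ∀ x ∉ ⋃ i, s i, f x = 0) :
    ∫ x, f x ∂μ = ∑' i, μ.real (s i) • c i := by
  rw [← setIntegral_eq_integral_of_forall_compl_eq_zero hzero,
    integral_iUnion hs hdisj hf.integrableOn]
  exact tsum_congr fun i => by rw [setIntegral_congr_fun (hs i) (hc i), setIntegral_const]

theorem Subgroup.measureReal_eq_inv_index {G : Type*} [Group G] [MeasurableSpace G]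
    [MeasurableMul G] (μ : Measure G) [μ.IsMulLeftInvariant] [IsProbabilityMeasure μ]
    (H : Subgroup G) [H.FiniteIndex] (hH : MeasurableSet (H : Set G)) :
    μ.real H = (H.index : ℝ)⁻¹ := by
  have h := congrArg ENNReal.toReal (H.index_mul_measure hH μ)
  rw [measure_univ, ENNReal.toReal_mul, ENNReal.toReal_natCast, ENNReal.toReal_one] at h
  exact eq_inv_of_mul_eq_one_right h

namespace PadicInt

variable {p : ℕ} [hp : Fact p.Prime]

variable (p) in
noncomputable def principalUnits (n : ℕ) : Subgroup ℤ_[p]ˣ :=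
  (Units.map (toZModPow n : ℤ_[p] →+* ZMod (p ^ n)).toMonoidHom).ker

theorem mem_principalUnits_iff {n : ℕ} {u : ℤ_[p]ˣ} :
    u ∈ principalUnits p n ↔ ‖(u : ℤ_[p]) - 1‖ ≤ (p : ℝ) ^ (-n : ℤ) := by
  rw [norm_le_pow_iff_mem_span_pow, ← ker_toZModPow, RingHom.mem_ker, map_sub, map_one,
    sub_eq_zero, principalUnits, MonoidHom.mem_ker, Units.ext_iff]
  rfl

theorem mem_principalUnits_iff_le_valuation {n : ℕ} {u : ℤ_[p]ˣ} (hu : u ≠ 1) :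
    u ∈ principalUnits p n ↔ n ≤ ((u : ℤ_[p]) - 1).valuation := by
  rw [mem_principalUnits_iff, norm_le_pow_iff_le_valuation]
  exact sub_ne_zero.2 (Units.val_eq_one.not.2 hu)

theorem principalUnits_succ_le (n : ℕ) : principalUnits p (n + 1) ≤ principalUnits p n := by
  intro u hu
  rw [mem_principalUnits_iff] at hu ⊢
  refine hu.trans (zpow_le_zpow_right₀ ?_ ?_)
  · exact_mod_cast hp.out.one_le
  · omega

theorem measurableSet_principalUnits [MeasurableSpace ℤ_[p]ˣ] [BorelSpace ℤ_[p]ˣ] (n : ℕ) :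
    MeasurableSet (principalUnits p n : Set ℤ_[p]ˣ) := by
  have hclosed : IsClosed {u : ℤ_[p]ˣ | ‖(u : ℤ_[p]) - 1‖ ≤ (p : ℝ) ^ (-n : ℤ)} :=
    isClosed_le (Units.continuous_val.sub continuous_const).norm continuous_const
  convert hclosed.measurableSet
  ext u
  exact mem_principalUnits_iff

theorem unitsMap_toZModPow_surjective (n : ℕ) :
    Function.Surjective (Units.map (toZModPow n : ℤ_[p] →+* ZMod (p ^ n)).toMonoidHom) := by
  have hsurj := ZMod.ringHom_surjective (toZModPow n : ℤ_[p] →+* ZMod (p ^ n))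
  cases n with
  | zero =>
    have : Subsingleton (ZMod (p ^ 0)) := by rw [pow_zero]; infer_instance
    exact fun _ => ⟨1, Subsingleton.elim _ _⟩
  | succ n =>
    have : Fact (1 < p ^ (n + 1)) := ⟨Nat.one_lt_pow n.succ_ne_zero hp.out.one_lt⟩
    exact IsLocalRing.surjective_units_map_of_local_ringHom _ hsurj
      (IsLocalHom.of_surjective _ hsurj)

instance (n : ℕ) : (principalUnits p n).FiniteIndex := Subgroup.finiteIndex_ker _

theorem index_principalUnits (n : ℕ) : (principalUnits p n).index = (p ^ n).totient := by
  rw [principalUnits, Subgroup.index_ker,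
    MonoidHom.range_eq_top.2 (unitsMap_toZModPow_surjective n), Subgroup.card_top,
    Nat.card_eq_fintype_card, ZMod.card_units_eq_totient]

theorem mem_principalUnits_sdiff_succ_iff {n : ℕ} {u : ℤ_[p]ˣ} :
    u ∈ (principalUnits p n : Set ℤ_[p]ˣ) \ principalUnits p (n + 1) ↔
      u ≠ 1 ∧ ((u : ℤ_[p]) - 1).valuation = n := by
  by_cases hu : u = 1
  · simp [hu]
  · rw [Set.mem_sdiff, SetLike.mem_coe, SetLike.mem_coe, mem_principalUnits_iff_le_valuation hu,
      mem_principalUnits_iff_le_valuation hu]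
    exact ⟨fun h => ⟨hu, by omega⟩, fun h => by omega⟩

theorem norm_sub_one_eq_of_mem_sdiff {n : ℕ} {u : ℤ_[p]ˣ}
    (hu : u ∈ (principalUnits p n : Set ℤ_[p]ˣ) \ principalUnits p (n + 1)) :
    ‖(u : ℤ_[p]) - 1‖ = (p : ℝ) ^ (-n : ℤ) := by
  obtain ⟨hne, hval⟩ := mem_principalUnits_sdiff_succ_iff.1 hu
  rw [norm_eq_zpow_neg_valuation (sub_ne_zero.2 (Units.val_eq_one.not.2 hne)), hval]

variable [MeasurableSpace ℤ_[p]ˣ] [BorelSpace ℤ_[p]ˣ] (μ : Measure ℤ_[p]ˣ) [μ.IsMulLeftInvariant]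
  [IsProbabilityMeasure μ]

theorem measureReal_principalUnits (n : ℕ) :
    μ.real (principalUnits p n) = ((p ^ n).totient : ℝ)⁻¹ := by
  rw [Subgroup.measureReal_eq_inv_index μ _ (measurableSet_principalUnits n),
    index_principalUnits]

theorem integral_norm_sub_one :
    ∫ u, ‖(u : ℤ_[p]) - 1‖ ∂μ =
      ∑' n : ℕ, (((p ^ n).totient : ℝ)⁻¹ - ((p ^ (n + 1)).totient : ℝ)⁻¹) * (p : ℝ) ^ (-n : ℤ) := by
  set shell : ℕ → Set ℤ_[p]ˣ := fun n =>
    (principalUnits p n : Set ℤ_[p]ˣ) \ principalUnits p (n + 1)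
  have hint : Integrable (fun u : ℤ_[p]ˣ => ‖(u : ℤ_[p]) - 1‖) μ :=
    .of_bound (Units.continuous_val.sub continuous_const).norm.aestronglyMeasurable 1
      (.of_forall fun u => by simpa using norm_le_one _)
  have hdisj : Pairwise (Function.onFun Disjoint shell) := by
    intro m n hmn
    refine Set.disjoint_left.2 fun u hm hn => hmn ?_
    rw [← (mem_principalUnits_sdiff_succ_iff.1 hm).2, (mem_principalUnits_sdiff_succ_iff.1 hn).2]
  have hzero : ∀ u ∉ ⋃ n, shell n, ‖(u : ℤ_[p]) - 1‖ = 0 := by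
    intro u hu
    by_contra hne
    have hu1 : u ≠ 1 := by rintro rfl; simp at hne
    exact hu (Set.mem_iUnion.2 ⟨_, mem_principalUnits_sdiff_succ_iff.2 ⟨hu1, rfl⟩⟩)
  rw [integral_eq_tsum_of_eqOn hint (fun n => (measurableSet_principalUnits n).diff
    (measurableSet_principalUnits (n + 1))) hdisj (fun n u hu => norm_sub_one_eq_of_mem_sdiff hu)
    hzero]
  refine tsum_congr fun n => ?_
  rw [measureReal_sdiff (principalUnits_succ_le n) (measurableSet_principalUnits _),
    measureReal_principalUnits, measureReal_principalUnits, smul_eq_mul]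

end PadicInt

theorem Nat.Prime.hasSum_inv_totient_pow_sub_mul_zpow {p : ℕ} (hp : p.Prime) :
    HasSum (fun n : ℕ =>
        (((p ^ n).totient : ℝ)⁻¹ - ((p ^ (n + 1)).totient : ℝ)⁻¹) * (p : ℝ) ^ (-n : ℤ))
      (((p : ℝ) ^ 2 - p - 1) / ((p : ℝ) ^ 2 - 1)) := by
  have hp1 : (1 : ℝ) < p := by exact_mod_cast hp.one_lt
  have hp1' : (p : ℝ) - 1 ≠ 0 := by linarith
  have hp2 : (p : ℝ) ^ 2 - 1 ≠ 0 := by nlinarith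
  have htotient (n : ℕ) : ((p ^ (n + 1)).totient : ℝ) = p ^ n * (p - 1) := by
    rw [Nat.totient_prime_pow_succ hp, Nat.cast_mul, Nat.cast_sub hp.one_le, Nat.cast_pow,
      Nat.cast_one]
  have hr0 : 0 ≤ ((p : ℝ) ^ 2)⁻¹ := by positivity
  have hr1 : ((p : ℝ) ^ 2)⁻¹ < 1 := inv_lt_one_of_one_lt₀ (one_lt_pow₀ hp1 two_ne_zero)
  have hsucc (n : ℕ) : (((p ^ (n + 1)).totient : ℝ)⁻¹ - ((p ^ (n + 1 + 1)).totient : ℝ)⁻¹) *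
      (p : ℝ) ^ (-(n + 1 : ℕ) : ℤ) = ((p : ℝ) ^ 2)⁻¹ * ((p : ℝ) ^ 2)⁻¹ ^ n := by
    rw [htotient, htotient, zpow_neg, zpow_natCast, inv_pow]
    field_simp
    ring
  rw [← hasSum_nat_add_iff' 1, Finset.sum_range_one]
  simp only [hsucc]
  have hvalue : ((p : ℝ) ^ 2 - p - 1) / ((p : ℝ) ^ 2 - 1) -
      (((p ^ 0).totient : ℝ)⁻¹ - ((p ^ (0 + 1)).totient : ℝ)⁻¹) * (p : ℝ) ^ (-(0 : ℕ) : ℤ) =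
      ((p : ℝ) ^ 2)⁻¹ * (1 - ((p : ℝ) ^ 2)⁻¹)⁻¹ := by
    simp only [htotient 0, pow_zero, Nat.totient_one, Nat.cast_one, Nat.cast_zero, neg_zero,
      zpow_zero]
    field_simp
    ring
  rw [hvalue]
  exact (hasSum_geometric_of_lt_one hr0 hr1).mul_left _

theorem density_fixed_point_torus_general (ℓ : ℕ) [Fact ℓ.Prime]
    [MeasurableSpace ℤ_[ℓ]ˣ] [BorelSpace ℤ_[ℓ]ˣ]
    (μ : Measure ℤ_[ℓ]ˣ) [μ.IsMulLeftInvariant] (hμ : μ Set.univ = 1) :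
    ∫ u : ℤ_[ℓ]ˣ, ‖(u : ℤ_[ℓ]) - 1‖ ∂μ
      = ((ℓ : ℝ) ^ 2 - ℓ - 1) / ((ℓ : ℝ) ^ 2 - 1) := by
  have : IsProbabilityMeasure μ := ⟨hμ⟩
  rw [PadicInt.integral_norm_sub_one μ]
  exact (Fact.out : ℓ.Prime).hasSum_inv_totient_pow_sub_mul_zpow.tsum_eq

/-- Let `ℓ` be an odd prime and `H = ℤ_ℓ ⋊ ℤ_ℓ^×`.  The density of elements of
`H` fixing a point of `ℤ/ℓⁿℤ` for every `n`, namely the integral over `ℤ_ℓ^×`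
of `u ↦ ℓ^{-v_ℓ(u-1)}` (equivalently `‖u - 1‖`, with `ℓ^{-v_ℓ(0)} := 0`)
against the normalized Haar measure, equals `(ℓ² - ℓ - 1)/(ℓ² - 1)`. -/
theorem density_fixed_point_torus (ℓ : ℕ) [Fact ℓ.Prime] (hodd : ℓ ≠ 2)
    [MeasurableSpace ℤ_[ℓ]ˣ] [BorelSpace ℤ_[ℓ]ˣ]
    (μ : Measure ℤ_[ℓ]ˣ) [μ.IsMulLeftInvariant] (hμ : μ Set.univ = 1) :
    ∫ u : ℤ_[ℓ]ˣ, ‖(u : ℤ_[ℓ]) - 1‖ ∂μ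
      = ((ℓ : ℝ) ^ 2 - ℓ - 1) / ((ℓ : ℝ) ^ 2 - 1) :=
  density_fixed_point_torus_general ℓ μ hμ
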